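/- The unnormalized graph operator depends only on the isomorphism class of the two-fold graph: for every N ∈ ℕ, every m ∈ ℕ, all α, β, α', β' : Fin m → ℕ, if there exist a permutation π of Fin m and injective maps f, g : ℕ → ℕ such that α' = f ∘ α ∘ π and β' = g ∘ β ∘ π, then Ṽ_N(α', β') = Ṽ_N(α, β) as ℂ-linear operators on R. -/

import Mathlib

/-!
Compatibility of `(a, b)` with `(α, β)` only records which entries of `α` and of `β` coincide,
and injective relabellings `f`, `g` of the vertices do not change that. Renumbering the edges by
`π` permutes the compatible pairs and, because partial derivatives commute, leaves every
`V_N(a|b)` unchanged once `a` and `b` are renumbered the same way.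
-/

open MvPolynomial

noncomputable abbrev R : Type := MvPolynomial (ℕ × ℕ) ℂ

/-- The `gl(∞)` generator `D_N(a,b) p = ∑_{e<N} X_{(a,e)} ∂p/∂X_{(b,e)}`. -/
noncomputable def Dop (N a b : ℕ) : R →ₗ[ℂ] R :=
  ∑ e ∈ Finset.range N,
    (LinearMap.mulLeft ℂ (X (a, e))) ∘ₗ (pderiv ((b, e) : ℕ × ℕ)).toLinearMap

/-- The normally ordered operator `V_N(a|b)`. -/
noncomputable def Vop (N : ℕ) {m : ℕ} (a b : Fin m → ℕ) : R →ₗ[ℂ] R :=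
  ∑ e : Fin m → Fin N,
    (LinearMap.mulLeft ℂ (∏ i, X (a i, (e i : ℕ)))) ∘ₗ
      (List.ofFn fun i => (pderiv ((b i, (e i : ℕ)) : ℕ × ℕ)).toLinearMap).prod

/-- The cut-and-join operator `W_N(σ) = ∑_a V_N(a | a∘σ)`. -/
noncomputable def Wop (N : ℕ) {m : ℕ} (σ : Equiv.Perm (Fin m)) : R →ₗ[ℂ] R :=
  ∑ a : Fin m → Fin N, Vop N (fun i => (a i : ℕ)) (fun i => (a (σ i) : ℕ))

/-- Compatibility of index tuples with a two-fold graph. -/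
def Compatible {N m : ℕ} (α β : Fin m → ℕ) (a b : Fin m → Fin N) : Prop :=
  (∀ i j, a i = a j ↔ α i = α j) ∧ (∀ i j, b i = b j ↔ β i = β j)

instance {N m : ℕ} (α β : Fin m → ℕ) (a b : Fin m → Fin N) :
    Decidable (Compatible α β a b) :=
  inferInstanceAs (Decidable (_ ∧ _))

/-- The unnormalized graph operator `Ṽ_N(α,β)`. -/
noncomputable def Vt (N : ℕ) {m : ℕ} (α β : Fin m → ℕ) : R →ₗ[ℂ] R :=
  ∑ p ∈ Finset.univ.filter
      (fun p : (Fin m → Fin N) × (Fin m → Fin N) => Compatible α β p.1 p.2),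
    Vop N (fun i => (p.1 i : ℕ)) (fun i => (p.2 i : ℕ))

theorem MvPolynomial.pderiv_pderiv_comm {σ S : Type*} [CommSemiring S] (i j : σ)
    (p : MvPolynomial σ S) : pderiv i (pderiv j p) = pderiv j (pderiv i p) := by
  induction p using MvPolynomial.induction_on' with
  | add p q hp hq => simp only [map_add, hp, hq]
  | monomial s a =>
    rcases eq_or_ne i j with rfl | hij
    · rfl
    · simp only [pderiv_monomial, Finsupp.tsub_apply, Finsupp.single_eq_of_ne hij,
        Finsupp.single_eq_of_ne hij.symm, Nat.sub_zero, tsub_right_comm]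
      ring_nf

theorem MvPolynomial.commute_pderiv {σ S : Type*} [CommSemiring S] (i j : σ) :
    Commute (pderiv i : Derivation S (MvPolynomial σ S) (MvPolynomial σ S)).toLinearMap
      (pderiv j).toLinearMap :=
  LinearMap.ext (pderiv_pderiv_comm i j)

theorem List.prod_ofFn_comp_perm {M : Type*} [Monoid M] {m : ℕ} (F : Fin m → M)
    (π : Equiv.Perm (Fin m)) (hF : ∀ i j, Commute (F i) (F j)) :
    (List.ofFn (F ∘ π)).prod = (List.ofFn F).prod :=
  (π.ofFn_comp_perm F).prod_eq' (List.pairwise_ofFn.2 fun _ _ _ => hF _ _)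

section

variable {m : ℕ}

theorem Vop_comp_perm (N : ℕ) (a b : Fin m → ℕ) (π : Equiv.Perm (Fin m)) :
    Vop N (a ∘ π) (b ∘ π) = Vop N a b := by
  refine (Fintype.sum_bijective (· ∘ π) π.bijective.comp_right _ _ fun e => ?_).symm
  exact congrArg₂ (fun P D => LinearMap.mulLeft ℂ P ∘ₗ D)
    (Equiv.prod_comp π fun i => X (a i, (e i : ℕ))).symm
    (List.prod_ofFn_comp_perm (fun i => (pderiv ((b i, (e i : ℕ)) : ℕ × ℕ)).toLinearMap) π
      fun _ _ => commute_pderiv _ _).symm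

theorem compatible_comp_injective {N : ℕ} {α β : Fin m → ℕ} {f g : ℕ → ℕ}
    (hf : Function.Injective f) (hg : Function.Injective g) (a b : Fin m → Fin N) :
    Compatible (f ∘ α) (g ∘ β) a b ↔ Compatible α β a b := by
  simp only [Compatible, Function.comp_apply, hf.eq_iff, hg.eq_iff]

theorem compatible_comp_perm {N : ℕ} (α β : Fin m → ℕ) (π : Equiv.Perm (Fin m))
    (a b : Fin m → Fin N) :
    Compatible (α ∘ π) (β ∘ π) (a ∘ π) (b ∘ π) ↔ Compatible α β a b :=
  and_congr (Equiv.forall₂_congr π π Iff.rfl) (Equiv.forall₂_congr π π Iff.rfl)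

theorem Vt_comp_injective (N : ℕ) (α β : Fin m → ℕ) {f g : ℕ → ℕ}
    (hf : Function.Injective f) (hg : Function.Injective g) :
    Vt N (f ∘ α) (g ∘ β) = Vt N α β := by
  simp only [Vt, compatible_comp_injective hf hg]

theorem Vt_comp_perm (N : ℕ) (α β : Fin m → ℕ) (π : Equiv.Perm (Fin m)) :
    Vt N (α ∘ π) (β ∘ π) = Vt N α β := by
  have hbij := π.bijective.comp_right (γ := Fin N)
  refine (Finset.sum_bijective (Prod.map (· ∘ π) (· ∘ π)) (hbij.prodMap hbij)
    (fun p => ?_) fun _ _ => (Vop_comp_perm N _ _ π).symm).symm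
  simp only [Finset.mem_filter, Finset.mem_univ, true_and, Prod.map_fst, Prod.map_snd,
    compatible_comp_perm]

end

/-- `Ṽ_N` depends only on the isomorphism class of the two-fold graph. -/
theorem Vt_iso_invariant (N m : ℕ) (α β α' β' : Fin m → ℕ)
    (π : Equiv.Perm (Fin m)) (f g : ℕ → ℕ)
    (hf : Function.Injective f) (hg : Function.Injective g)
    (hα : α' = f ∘ α ∘ π) (hβ : β' = g ∘ β ∘ π) :
    Vt N α' β' = Vt N α β := by
  subst hα hβ
  rw [Vt_comp_injective N _ _ hf hg, Vt_comp_perm]
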